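/- Let a_0, a_1, a_2, b_0, b_1, b_2 ∈ ℝ³. Let T = {(s_1, s_2) ∈ ℝ² : s_1 ≥ 0, s_2 ≥ 0, s_1 + s_2 ≤ 1} be the standard 2-simplex, and define X(s_1, s_2, t) = (1−t)(a_0 + s_1(a_1 − a_0) + s_2(a_2 − a_0)) + t(b_0 + s_1(b_1 − b_0) + s_2(b_2 − b_0)) for (s_1, s_2) ∈ T, t ∈ [0,1]. Set d_k = b_k − a_k for k = 0, 1, 2, A⁰ = (a_1 − a_0) × (a_2 − a_0), A¹ = (b_1 − b_0) × (b_2 − b_0), and A^{1/2} = (c_1 − c_0) × (c_2 − c_0) with c_k = (a_k + b_k)/2. Then ∫_0^1 ∫_T det(∂_{s_1} X, ∂_{s_2} X, ∂_t X) ds_1 ds_2 dt = (1/36) (d_0 + d_1 + d_2) · (A⁰ + 4 A^{1/2} + A¹). -/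

import Mathlib

/-!
For fixed `t` the partial derivatives in `s₁, s₂` are the edge vectors `e₁(t), e₂(t)` of the
triangle at time `t`, and `∂ₜX` is the affine interpolation of the vertex displacements `dₖ`.
The integrand is therefore affine on `T`, so its integral is the area `1/2` times its value at
the centroid, `(e₁(t) × e₂(t)) · (d₀ + d₁ + d₂) / 3`. This is a quadratic polynomial in `t`, for
which Simpson's rule is exact; its nodes `t = 0, 1/2, 1` produce `A⁰`, `A^{1/2}` and `A¹`.
-/

open MeasureTheory Set

def stdTriangle : Set (ℝ × ℝ) := {s | 0 ≤ s.1 ∧ 0 ≤ s.2 ∧ s.1 + s.2 ≤ 1}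

lemma isClosed_stdTriangle : IsClosed stdTriangle :=
  (isClosed_le continuous_const continuous_fst).inter
    ((isClosed_le continuous_const continuous_snd).inter
      (isClosed_le (continuous_fst.add continuous_snd) continuous_const))

lemma isCompact_stdTriangle : IsCompact stdTriangle := by
  refine (isCompact_Icc (a := ((0 : ℝ), (0 : ℝ))) (b := (1, 1))).of_isClosed_subset
    isClosed_stdTriangle ?_
  rintro ⟨x, y⟩ ⟨hx, hy, hxy⟩
  exact ⟨⟨hx, hy⟩, by constructor <;> dsimp only at * <;> linarith⟩

lemma mem_stdTriangle_iff {x y : ℝ} :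
    (x, y) ∈ stdTriangle ↔ x ∈ Icc (0 : ℝ) 1 ∧ y ∈ Icc 0 (1 - x) := by
  simp only [stdTriangle, mem_ofPred_eq, mem_Icc]
  constructor
  · rintro ⟨hx, hy, hxy⟩; exact ⟨⟨hx, by linarith⟩, hy, by linarith⟩
  · rintro ⟨⟨hx, -⟩, hy, hxy⟩; exact ⟨hx, hy, by linarith⟩

lemma setIntegral_stdTriangle {f : ℝ × ℝ → ℝ} (hf : Continuous f) :
    ∫ s in stdTriangle, f s = ∫ x in (0 : ℝ)..1, ∫ y in (0 : ℝ)..(1 - x), f (x, y) := by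
  have hmeas : MeasurableSet stdTriangle := isClosed_stdTriangle.measurableSet
  have hint : Integrable (stdTriangle.indicator f) (volume.prod volume) := by
    rw [← Measure.volume_eq_prod, integrable_indicator_iff hmeas]
    exact hf.continuousOn.integrableOn_compact isCompact_stdTriangle
  rw [← integral_indicator hmeas, Measure.volume_eq_prod, integral_prod _ hint,
    intervalIntegral.integral_of_le zero_le_one, ← integral_Icc_eq_integral_Ioc,
    ← integral_indicator measurableSet_Icc]
  congr 1
  ext x
  by_cases hx : x ∈ Icc (0 : ℝ) 1
  · rw [indicator_of_mem hx, intervalIntegral.integral_of_le (by linarith [hx.2]),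
      ← integral_Icc_eq_integral_Ioc, ← integral_indicator measurableSet_Icc]
    congr 1
    ext y
    by_cases hy : y ∈ Icc 0 (1 - x) <;> simp [hx, hy, mem_stdTriangle_iff]
  · rw [indicator_of_notMem hx]
    simp [mem_stdTriangle_iff, hx]

lemma integral_quadratic (a b p q r : ℝ) :
    ∫ x in a..b, (p + q * x + r * x ^ 2) =
      p * (b - a) + q * (b ^ 2 - a ^ 2) / 2 + r * (b ^ 3 - a ^ 3) / 3 := by
  have hint : ∀ f : ℝ → ℝ, Continuous f → IntervalIntegrable f volume a b :=
    fun f hf => hf.intervalIntegrable _ _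
  rw [intervalIntegral.integral_add (hint _ (by fun_prop)) (hint _ (by fun_prop)),
    intervalIntegral.integral_add (hint _ (by fun_prop)) (hint _ (by fun_prop)),
    intervalIntegral.integral_const, intervalIntegral.integral_const_mul,
    intervalIntegral.integral_const_mul, integral_id, integral_pow, smul_eq_mul]
  ring

lemma integral_eq_simpson_of_quadratic {f : ℝ → ℝ} {p q r : ℝ}
    (hf : ∀ x, f x = p + q * x + r * x ^ 2) (a b : ℝ) :
    ∫ x in a..b, f x = (b - a) / 6 * (f a + 4 * f ((a + b) / 2) + f b) := by
  simp only [hf, integral_quadratic]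
  ring

lemma setIntegral_stdTriangle_affine (p q r : ℝ) :
    ∫ s in stdTriangle, (p + q * s.1 + r * s.2) = p / 2 + q / 6 + r / 6 := by
  rw [setIntegral_stdTriangle (by fun_prop)]
  have hinner : ∀ x : ℝ, ∫ y in (0 : ℝ)..(1 - x), (p + q * x + r * y) =
      (p + r / 2) + (q - p - r) * x + (r / 2 - q) * x ^ 2 := by
    intro x
    have h := integral_quadratic 0 (1 - x) (p + q * x) r 0
    simp only [zero_mul, add_zero, sub_zero] at h
    linear_combination h
  simp only [hinner, integral_quadratic]
  ring

lemma setIntegral_stdTriangle_dotProduct {n : Type*} [Fintype n] (w x₀ x₁ x₂ : n → ℝ) :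
    ∫ s in stdTriangle, w ⬝ᵥ (x₀ + s.1 • (x₁ - x₀) + s.2 • (x₂ - x₀)) =
      w ⬝ᵥ (x₀ + x₁ + x₂) / 6 := by
  have h : ∀ s : ℝ × ℝ, w ⬝ᵥ (x₀ + s.1 • (x₁ - x₀) + s.2 • (x₂ - x₀)) =
      w ⬝ᵥ x₀ + w ⬝ᵥ (x₁ - x₀) * s.1 + w ⬝ᵥ (x₂ - x₀) * s.2 := fun s => by
    simp only [dotProduct_add, dotProduct_smul, smul_eq_mul]
    ring
  simp only [h, setIntegral_stdTriangle_affine, dotProduct_add, dotProduct_sub]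
  ring

lemma exists_quadratic_crossProduct_dotProduct {R : Type*} [CommRing R] (P Q U V w : Fin 3 → R) :
    ∃ p q r : R, ∀ t : R,
      crossProduct ((1 - t) • P + t • Q) ((1 - t) • U + t • V) ⬝ᵥ w = p + q * t + r * t ^ 2 := by
  refine ⟨crossProduct P U ⬝ᵥ w,
    crossProduct P V ⬝ᵥ w + crossProduct Q U ⬝ᵥ w - 2 * crossProduct P U ⬝ᵥ w,
    crossProduct P U ⬝ᵥ w - crossProduct P V ⬝ᵥ w - crossProduct Q U ⬝ᵥ w + crossProduct Q V ⬝ᵥ w,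
    fun t => ?_⟩
  simp only [map_add, map_smul, LinearMap.add_apply, LinearMap.smul_apply, add_dotProduct,
    smul_dotProduct, smul_eq_mul]
  ring

section Sweep

variable {E : Type*} [NormedAddCommGroup E] [NormedSpace ℝ E]

lemma deriv_const_add_smul (C M : E) (x : ℝ) : deriv (fun y : ℝ => C + y • M) x = M := by
  simpa using (((hasDerivAt_id x).smul_const M).const_add C).deriv

variable (a₀ a₁ a₂ b₀ b₁ b₂ : E)

def triangleSweep (s₁ s₂ t : ℝ) : E :=
  (1 - t) • (a₀ + s₁ • (a₁ - a₀) + s₂ • (a₂ - a₀)) + t • (b₀ + s₁ • (b₁ - b₀) + s₂ • (b₂ - b₀))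

lemma deriv_triangleSweep_param₁ (s₁ s₂ t : ℝ) :
    deriv (fun x => triangleSweep a₀ a₁ a₂ b₀ b₁ b₂ x s₂ t) s₁ =
      (1 - t) • (a₁ - a₀) + t • (b₁ - b₀) := by
  have h : (fun x => triangleSweep a₀ a₁ a₂ b₀ b₁ b₂ x s₂ t) = fun x =>
      ((1 - t) • (a₀ + s₂ • (a₂ - a₀)) + t • (b₀ + s₂ • (b₂ - b₀))) +
        x • ((1 - t) • (a₁ - a₀) + t • (b₁ - b₀)) := by
    funext x; simp only [triangleSweep]; module
  rw [h, deriv_const_add_smul]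

lemma deriv_triangleSweep_param₂ (s₁ s₂ t : ℝ) :
    deriv (fun y => triangleSweep a₀ a₁ a₂ b₀ b₁ b₂ s₁ y t) s₂ =
      (1 - t) • (a₂ - a₀) + t • (b₂ - b₀) := by
  have h : (fun y => triangleSweep a₀ a₁ a₂ b₀ b₁ b₂ s₁ y t) = fun y =>
      ((1 - t) • (a₀ + s₁ • (a₁ - a₀)) + t • (b₀ + s₁ • (b₁ - b₀))) +
        y • ((1 - t) • (a₂ - a₀) + t • (b₂ - b₀)) := by
    funext y; simp only [triangleSweep]; module
  rw [h, deriv_const_add_smul]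

lemma deriv_triangleSweep_time (s₁ s₂ t : ℝ) :
    deriv (fun τ => triangleSweep a₀ a₁ a₂ b₀ b₁ b₂ s₁ s₂ τ) t =
      (b₀ - a₀) + s₁ • ((b₁ - a₁) - (b₀ - a₀)) + s₂ • ((b₂ - a₂) - (b₀ - a₀)) := by
  have h : (fun τ => triangleSweep a₀ a₁ a₂ b₀ b₁ b₂ s₁ s₂ τ) = fun τ =>
      (a₀ + s₁ • (a₁ - a₀) + s₂ • (a₂ - a₀)) +
        τ • ((b₀ - a₀) + s₁ • ((b₁ - a₁) - (b₀ - a₀)) + s₂ • ((b₂ - a₂) - (b₀ - a₀))) := by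
    funext τ; simp only [triangleSweep]; module
  rw [h, deriv_const_add_smul]

end Sweep

/-- The signed volume swept by a triangle moving by linear interpolation from
`(a₀,a₁,a₂)` to `(b₀,b₁,b₂)` equals `(1/36)(d₀+d₁+d₂)·(A⁰+4A^{1/2}+A¹)`,
where `d_k = b_k - a_k` are the vertex displacements and `A⁰, A^{1/2}, A¹` are
the orientation vectors of the initial, midpoint and final triangles
(per-element `d = 3` content of Lemma 3.1 combined with Remark 3.1). -/
theorem stmt10 (a0 a1 a2 b0 b1 b2 : Fin 3 → ℝ)
    (T : Set (ℝ × ℝ)) (hT : T = {s : ℝ × ℝ | 0 ≤ s.1 ∧ 0 ≤ s.2 ∧ s.1 + s.2 ≤ 1})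
    (X : ℝ → ℝ → ℝ → Fin 3 → ℝ)
    (hX : ∀ s1 s2 t, X s1 s2 t =
      (1 - t) • (a0 + s1 • (a1 - a0) + s2 • (a2 - a0)) +
        t • (b0 + s1 • (b1 - b0) + s2 • (b2 - b0)))
    (d0 d1 d2 : Fin 3 → ℝ)
    (hd0 : d0 = b0 - a0) (hd1 : d1 = b1 - a1) (hd2 : d2 = b2 - a2)
    (c0 c1 c2 : Fin 3 → ℝ)
    (hc0 : c0 = (2:ℝ)⁻¹ • (a0 + b0)) (hc1 : c1 = (2:ℝ)⁻¹ • (a1 + b1))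
    (hc2 : c2 = (2:ℝ)⁻¹ • (a2 + b2))
    (A0 Ah A1 : Fin 3 → ℝ)
    (hA0 : A0 = crossProduct (a1 - a0) (a2 - a0))
    (hAh : Ah = crossProduct (c1 - c0) (c2 - c0))
    (hA1 : A1 = crossProduct (b1 - b0) (b2 - b0)) :
    (∫ t in (0:ℝ)..1, ∫ s in T,
        crossProduct (deriv (fun x => X x s.2 t) s.1)
            (deriv (fun y => X s.1 y t) s.2) ⬝ᵥ
          deriv (fun τ => X s.1 s.2 τ) t) =
      (36:ℝ)⁻¹ * ((d0 + d1 + d2) ⬝ᵥ (A0 + (4:ℝ) • Ah + A1)) := by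
  obtain rfl : T = stdTriangle := hT
  obtain rfl : X = triangleSweep a0 a1 a2 b0 b1 b2 :=
    funext fun s1 => funext fun s2 => funext (hX s1 s2)
  subst hd0 hd1 hd2 hc0 hc1 hc2 hA0 hAh hA1
  simp only [deriv_triangleSweep_param₁, deriv_triangleSweep_param₂, deriv_triangleSweep_time,
    setIntegral_stdTriangle_dotProduct, intervalIntegral.integral_div]
  obtain ⟨p, q, r, hquad⟩ := exists_quadratic_crossProduct_dotProduct (a1 - a0) (b1 - b0)
    (a2 - a0) (b2 - b0) (b0 - a0 + (b1 - a1) + (b2 - a2))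
  rw [integral_eq_simpson_of_quadratic hquad]
  have hmidEdge : ∀ x y z w : Fin 3 → ℝ,
      (1 - (0 + 1) / 2 : ℝ) • (x - y) + ((0 + 1) / 2 : ℝ) • (z - w) =
        (2 : ℝ)⁻¹ • (x + z) - (2 : ℝ)⁻¹ • (y + w) := fun _ _ _ _ => by module
  rw [hmidEdge, hmidEdge, dotProduct_comm (b0 - a0 + (b1 - a1) + (b2 - a2)), add_dotProduct,
    add_dotProduct, smul_dotProduct]
  simp only [sub_zero, sub_self, one_smul, zero_smul, add_zero, zero_add, smul_eq_mul]
  ring
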